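/- Let G be a closed subgroup of Isom(T_{q+1})_ω. Suppose that (i) the elliptic elements of G act transitively on the ends of T_{q+1} other than ω (for all ξ, ξ′ : ℤ → {0,…,q−1} with ξ_i = 0 = ξ′_i for all sufficiently small i, there is an elliptic g ∈ G with g(ξ|_m) = ξ′|_m for every m ∈ ℤ), and (ii) there exist a vertex v and g ∈ G such that g(v) is adjacent to v. Then G acts transitively on the vertex set, i.e. G is a scale group. -/

import Mathlib

namespace Scale

/-- A vertex of the `(q+1)`-regular tree `T_{q+1}`: a level `n ∈ ℤ` together with a
labelling `ℤ → Fin q` which vanishes above the level and for all sufficiently small indices. -/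
@[ext] structure Vertex (q : ℕ) where
  level : ℤ
  lab : ℤ → Fin q
  zero_gt : ∀ i : ℤ, level < i → (lab i : ℕ) = 0
  bdd : ∃ N : ℤ, ∀ i : ℤ, i < N → (lab i : ℕ) = 0

namespace Vertex

variable {q : ℕ} [NeZero q]

/-- The parent `v⁺` of a vertex. -/
def parent (v : Vertex q) : Vertex q where
  level := v.level - 1
  lab := fun i => if v.level - 1 < i then 0 else v.lab i
  zero_gt := by intro i hi; simp [hi]
  bdd := by
    obtain ⟨N, hN⟩ := v.bdd
    refine ⟨N, fun i hi => ?_⟩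
    by_cases h : v.level - 1 < i
    · simp [h]
    · simp [h, hN i hi]

/-- The child `vj` of a vertex `v`. -/
def child (v : Vertex q) (j : Fin q) : Vertex q where
  level := v.level + 1
  lab := fun i => if i = v.level + 1 then j else v.lab i
  zero_gt := by
    intro i hi
    have h1 : i ≠ v.level + 1 := by omega
    simp [h1, v.zero_gt i (by omega)]
  bdd := by
    obtain ⟨N, hN⟩ := v.bdd
    refine ⟨min N (v.level + 1), fun i hi => ?_⟩
    have h1 : i < N := lt_of_lt_of_le hi (min_le_left _ _)
    have h2 : i < v.level + 1 := lt_of_lt_of_le hi (min_le_right _ _)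
    have h3 : i ≠ v.level + 1 := by omega
    simp [h3, hN i h1]

/-- The restriction `w|_m` of a vertex to level `m`. -/
def trunc (v : Vertex q) (m : ℤ) : Vertex q where
  level := m
  lab := fun i => if m < i then 0 else v.lab i
  zero_gt := by intro i hi; simp [hi]
  bdd := by
    obtain ⟨N, hN⟩ := v.bdd
    refine ⟨N, fun i hi => ?_⟩
    by_cases h : m < i
    · simp [h]
    · simp [h, hN i hi]

/-- `w` is a descendant of `u` (in the rooted subtree `T_u`). -/
def Descendant (u w : Vertex q) : Prop := u.level ≤ w.level ∧ trunc w u.level = u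

end Vertex

/-- The all-zero vertex `ṽ_n` at level `n`. -/
def zeroVtx (q : ℕ) [NeZero q] (n : ℤ) : Vertex q where
  level := n
  lab := fun _ => 0
  zero_gt := by intro i _; simp
  bdd := ⟨0, by intro i _; simp⟩

/-- The map shifting all labels by `k` (a translation towards the end `ω` when `k > 0`). -/
def shiftMap {q : ℕ} (k : ℤ) (v : Vertex q) : Vertex q where
  level := v.level + k
  lab := fun i => v.lab (i - k)
  zero_gt := fun i hi => v.zero_gt (i - k) (by omega)
  bdd := by
    obtain ⟨N, hN⟩ := v.bdd
    exact ⟨N + k, fun i hi => hN (i - k) (by omega)⟩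

/-- The translation `x̃₀ᵏ` of `T_{q+1}` as a permutation of the vertices. -/
def shiftPerm (q : ℕ) (k : ℤ) : Equiv.Perm (Vertex q) where
  toFun := shiftMap k
  invFun := shiftMap (-k)
  left_inv := by
    intro v
    refine Vertex.ext ?_ ?_
    · show v.level + k + -k = v.level
      omega
    · funext i
      show v.lab (i - -k - k) = v.lab i
      congr 1
      omega
  right_inv := by
    intro v
    refine Vertex.ext ?_ ?_
    · show v.level + -k + k = v.level
      omega
    · funext i
      show v.lab (i - k - -k) = v.lab i
      congr 1
      omega

/-- The group `Isom(T_{q+1})_ω` of tree automorphisms fixing the distinguished end `ω`,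
realised as the subgroup of permutations of the vertex set commuting with `parent`. -/
def IsomOmega (q : ℕ) [NeZero q] : Subgroup (Equiv.Perm (Vertex q)) where
  carrier := {x | ∀ v : Vertex q, x (Vertex.parent v) = Vertex.parent (x v)}
  one_mem' := fun _ => rfl
  mul_mem' := by
    intro a b ha hb v
    show (a * b) (Vertex.parent v) = Vertex.parent ((a * b) v)
    rw [Equiv.Perm.mul_apply, Equiv.Perm.mul_apply, hb, ha]
  inv_mem' := by
    intro a ha v
    show a⁻¹ (Vertex.parent v) = Vertex.parent (a⁻¹ v)
    have h := ha (a⁻¹ v)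
    rw [show a (a⁻¹ v) = v from a.apply_symm_apply v] at h
    rw [← h, show a⁻¹ (a (Vertex.parent (a⁻¹ v))) = Vertex.parent (a⁻¹ v) from a.symm_apply_apply _]

/-- The level shift `n(x)` of an automorphism (evaluated at the zero vertex; for members
of `IsomOmega q` the shift is the same at every vertex). -/
def lshift {q : ℕ} [NeZero q] (x : Equiv.Perm (Vertex q)) : ℤ := (x (zeroVtx q 0)).level

/-- An automorphism is elliptic if it fixes a vertex. -/
def Elliptic {q : ℕ} (x : Equiv.Perm (Vertex q)) : Prop := ∃ v : Vertex q, x v = v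

/-- Topology of pointwise convergence on `X → X` for `X` discrete. -/
def funTop (X : Type*) : TopologicalSpace (X → X) :=
  @Pi.topologicalSpace X (fun _ => X) (fun _ => ⊥)

/-- The permutation topology on `Equiv.Perm X`: pointwise stabilisers of finite sets of
points form a neighbourhood basis of the identity. -/
def permTop (X : Type*) : TopologicalSpace (Equiv.Perm X) :=
  @TopologicalSpace.induced (Equiv.Perm X) ((X → X) × (X → X))
    (fun g => ((g : X → X), ((g⁻¹ : Equiv.Perm X) : X → X)))
    (@instTopologicalSpaceProd _ _ (funTop X) (funTop X))

instance (q : ℕ) : TopologicalSpace (Equiv.Perm (Vertex q)) := permTop _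

instance (q : ℕ) : TopologicalSpace (Equiv.Perm (List (Fin q))) := permTop _

/-- A scale group: a closed subgroup of `Isom(T_{q+1})_ω` acting transitively on vertices. -/
def IsScaleGroup {q : ℕ} [NeZero q] (P : Subgroup (Equiv.Perm (Vertex q))) : Prop :=
  P ≤ IsomOmega q ∧ IsClosed (P : Set (Equiv.Perm (Vertex q))) ∧
    ∀ v w : Vertex q, ∃ x ∈ P, x v = w

/-- The stabiliser of the vertex `v` in `P`, as a subgroup of the ambient permutation group. -/
def stabIn {q : ℕ} (P : Subgroup (Equiv.Perm (Vertex q))) (v : Vertex q) :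
    Subgroup (Equiv.Perm (Vertex q)) where
  carrier := {g | g ∈ P ∧ g v = v}
  one_mem' := ⟨P.one_mem, rfl⟩
  mul_mem' := by
    intro a b ha hb
    exact ⟨P.mul_mem ha.1 hb.1, by rw [Equiv.Perm.mul_apply, hb.2, ha.2]⟩
  inv_mem' := by
    intro a ha
    refine ⟨P.inv_mem ha.1, ?_⟩
    rw [Equiv.Perm.inv_eq_iff_eq]
    exact ha.2.symm

/-- The conjugate subgroup `xVx⁻¹`. -/
def conjSub {G : Type*} [Group G] (x : G) (V : Subgroup G) : Subgroup G :=
  V.map (MulAut.conj x).toMonoidHom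

/-- The vertex `ξ|_m` on the ray towards the end represented by `ξ`. -/
def ray (q : ℕ) [NeZero q] (ξ : ℤ → Fin q) (N : ℤ) (hξ : ∀ i : ℤ, i < N → (ξ i : ℕ) = 0)
    (m : ℤ) : Vertex q where
  level := m
  lab := fun i => if m < i then 0 else ξ i
  zero_gt := by intro i hi; simp [hi]
  bdd := by
    refine ⟨N, fun i hi => ?_⟩
    by_cases h : m < i
    · simp [h]
    · simp [h, hξ i hi]

/-- The contraction group of `x` in `P`. -/
def conSet {q : ℕ} (P : Subgroup (Equiv.Perm (Vertex q))) (x : Equiv.Perm (Vertex q)) :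
    Set (Equiv.Perm (Vertex q)) :=
  {g | g ∈ P ∧ ∀ v : Vertex q, ∃ N : ℕ, ∀ n : ℕ, N ≤ n → (x ^ n * g * (x ^ n)⁻¹) v = v}


/-- `c` is a `P`-labelling of `T_{q+1}` with distinguished bi-infinite path `vp`:
each `c v` is a bijection from the directed edges out of `v` (encoded as the
neighbours of `v`) to `{0, …, q}`; the edge towards the parent is labelled `q`;
along the path `vp` the downward edges are labelled `0`; and `P` contains, for
all `u₁, u₂`, an element carrying `u₁` to `u₂` and preserving the labels on the
rooted subtree of descendants of `u₁`. -/
def IsPLabelling {q : ℕ} [NeZero q] (P : Subgroup (Equiv.Perm (Vertex q)))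
    (c : Vertex q → Vertex q → Fin (q + 1)) (vp : ℤ → Vertex q) : Prop :=
  (∀ v : Vertex q, ∀ j : Fin (q + 1),
      ∃! w : Vertex q, (Vertex.parent w = v ∨ w = Vertex.parent v) ∧ c v w = j) ∧
  (∀ v : Vertex q, (c v (Vertex.parent v) : ℕ) = q) ∧
  (∀ n : ℤ, Vertex.parent (vp (n + 1)) = vp n) ∧
  (∀ n : ℤ, (c (vp n) (vp (n + 1)) : ℕ) = 0) ∧
  (∀ u₁ u₂ : Vertex q, ∃ x, x ∈ P ∧ x u₁ = u₂ ∧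
    ∀ w w' : Vertex q, Vertex.Descendant u₁ w → Vertex.Descendant u₁ w' →
      (Vertex.parent w = w' ∨ Vertex.parent w' = w) → c (x w) (x w') = c w w')

open Classical in
/-- The standard labelling of `T_{q+1}`: the edge from `v` to its child `vj` is
labelled `j` and the edge towards the parent is labelled `q`. -/
noncomputable def stdLabel (q : ℕ) [NeZero q] : Vertex q → Vertex q → Fin (q + 1) :=
  fun v w =>
    if Vertex.parent w = v then Fin.castLE (Nat.le_succ q) (w.lab (v.level + 1))
    else Fin.last q

/-- Convert an edge label in `{0,…,q}` known to be `< q` into a letter in `{0,…,q-1}`. -/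
def toFinQ {q : ℕ} [NeZero q] (j : Fin (q + 1)) : Fin q :=
  if h : (j : ℕ) < q then ⟨j, h⟩ else ⟨0, Nat.pos_of_ne_zero (NeZero.ne q)⟩

/-- The string of labels read along the downward path of length `d` ending at `w`. -/
def labelString {q : ℕ} [NeZero q] (c : Vertex q → Vertex q → Fin (q + 1)) :
    Vertex q → ℕ → List (Fin q)
  | _, 0 => []
  | w, (d + 1) => labelString c (Vertex.parent w) d ++ [toFinQ (c (Vertex.parent w) w)]

/-- The isomorphism `φ^c_v : T_v → T_{q,q}` given by a labelling `c`: a descendant `w`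
of `v` is sent to the string of labels along the path from `v` down to `w`. -/
def phiStr {q : ℕ} [NeZero q] (c : Vertex q → Vertex q → Fin (q + 1)) (v w : Vertex q) :
    List (Fin q) :=
  labelString c w ((w.level - v.level).toNat)

/-- The set `P|_v = {φ^c_{x(v)} ∘ x ∘ (φ^c_v)⁻¹ : x ∈ P}` of sections of elements of `P`
at the vertex `v`, with respect to the labelling `c`. -/
def sectSet {q : ℕ} [NeZero q] (P : Subgroup (Equiv.Perm (Vertex q)))
    (c : Vertex q → Vertex q → Fin (q + 1)) (v : Vertex q) :
    Set (Equiv.Perm (List (Fin q))) :=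
  {g | ∃ x, x ∈ P ∧ ∀ w : Vertex q, Vertex.Descendant v w →
        g (phiStr c v w) = phiStr c (x v) (x w)}

/-- The standard isomorphism `φ_v : T_v → T_{q,q}`: a descendant `w` of `v` of level `m`
is sent to the string `(w_{n+1}, …, w_m)` where `n` is the level of `v`. -/
def stdStr {q : ℕ} (v w : Vertex q) : List (Fin q) :=
  (List.range (w.level - v.level).toNat).map fun k => w.lab (v.level + 1 + k)

/-- The set `{φ_{x(v)} ∘ x ∘ φ_v⁻¹ : x ∈ P}` with respect to the standard isomorphisms. -/
def stdSect {q : ℕ} [NeZero q] (P : Subgroup (Equiv.Perm (Vertex q))) (v : Vertex q) :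
    Set (Equiv.Perm (List (Fin q))) :=
  {g | ∃ x, x ∈ P ∧ ∀ w : Vertex q, Vertex.Descendant v w →
        g (stdStr v w) = stdStr (x v) (x w)}

/-- `Isom(T_{q,q})`: the group of permutations of the set of finite strings over
`{0,…,q-1}` preserving length and the prefix relation. -/
def RIsom (q : ℕ) : Subgroup (Equiv.Perm (List (Fin q))) where
  carrier := {g | (∀ l : List (Fin q), (g l).length = l.length) ∧
    ∀ l₁ l₂ : List (Fin q), l₁ <+: l₂ → g l₁ <+: g l₂}
  one_mem' := ⟨fun _ => rfl, fun _ _ h => h⟩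
  mul_mem' := by
    intro a b ha hb
    constructor
    · intro l
      rw [Equiv.Perm.mul_apply, ha.1, hb.1]
    · intro l₁ l₂ h
      rw [Equiv.Perm.mul_apply, Equiv.Perm.mul_apply]
      exact ha.2 _ _ (hb.2 _ _ h)
  inv_mem' := by
    intro a ha
    have hlen : ∀ l : List (Fin q), (a⁻¹ l).length = l.length := by
      intro l
      have h := ha.1 (a⁻¹ l)
      rw [show a (a⁻¹ l) = l from a.apply_symm_apply l] at h
      exact h.symm
    refine ⟨hlen, ?_⟩
    intro l₁ l₂ h
    have htake : List.take (a⁻¹ l₁).length (a⁻¹ l₂) <+: a⁻¹ l₂ := List.take_prefix _ _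
    have h2 : a (List.take (a⁻¹ l₁).length (a⁻¹ l₂)) <+: a (a⁻¹ l₂) := ha.2 _ _ htake
    rw [show a (a⁻¹ l₂) = l₂ from a.apply_symm_apply l₂] at h2
    have hle : l₁.length ≤ l₂.length := h.length_le
    have hlen3 : (a (List.take (a⁻¹ l₁).length (a⁻¹ l₂))).length = l₁.length := by
      rw [ha.1, List.length_take, hlen, hlen]
      omega
    have hpre : a (List.take (a⁻¹ l₁).length (a⁻¹ l₂)) <+: l₁ :=
      List.prefix_of_prefix_length_le h2 h (le_of_eq hlen3)
    have heq : a (List.take (a⁻¹ l₁).length (a⁻¹ l₂)) = l₁ := hpre.eq_of_length hlen3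
    have heq2 : List.take (a⁻¹ l₁).length (a⁻¹ l₂) = a⁻¹ l₁ := by
      apply a.injective
      rw [heq, show a (a⁻¹ l₁) = l₁ from a.apply_symm_apply l₁]
    rw [← heq2]
    exact List.take_prefix _ _

/-- A subgroup of `Isom(T_{q,q})` is self-replicating if it is self-similar, transitive
on level 1, and all the section homomorphisms `g ↦ g|_w` are surjective. -/
def SelfReplicating {q : ℕ} (G : Subgroup (Equiv.Perm (List (Fin q)))) : Prop :=
  (∀ w : List (Fin q), ∀ g, g ∈ G → g w = w →
      ∃ g', g' ∈ G ∧ ∀ v : List (Fin q), g (w ++ v) = w ++ g' v) ∧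
  (∀ j j' : Fin q, ∃ g ∈ G, g [j] = [j']) ∧
  (∀ w : List (Fin q), ∀ g', g' ∈ G →
      ∃ g, g ∈ G ∧ g w = w ∧ ∀ v : List (Fin q), g (w ++ v) = w ++ g' v)

/-- The stabiliser of the string `w` in `G ≤ Isom(T_{q,q})`, as a subgroup of `G`. -/
def rstab {q : ℕ} (G : Subgroup (Equiv.Perm (List (Fin q)))) (w : List (Fin q)) :
    Subgroup G where
  carrier := {g | (g : Equiv.Perm (List (Fin q))) w = w}
  one_mem' := rfl
  mul_mem' := by
    intro a b ha hb
    show ((a * b : G) : Equiv.Perm (List (Fin q))) w = w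
    rw [Subgroup.coe_mul, Equiv.Perm.mul_apply]
    rw [show (b : Equiv.Perm (List (Fin q))) w = w from hb,
      show (a : Equiv.Perm (List (Fin q))) w = w from ha]
  inv_mem' := by
    intro a ha
    show ((a⁻¹ : G) : Equiv.Perm (List (Fin q))) w = w
    rw [Subgroup.coe_inv, Equiv.Perm.inv_eq_iff_eq]
    exact (show (a : Equiv.Perm (List (Fin q))) w = w from ha).symm


end Scale

/-!
An element of `Isom(T_{q+1})_ω` commutes with taking parents, and any two vertices have a common
ancestor, so it shifts all levels by the same amount `lshift x`, additively in `x`. An element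
moving a vertex to a neighbour has shift `±1`, so its powers realise every shift in `G`. Within
a level, a vertex `v` is `ξ|_m` for `ξ` its own labelling, so transitivity on ends gives
transitivity on each level.
-/

namespace Scale

variable {q : ℕ} [NeZero q]

namespace Vertex

theorem trunc_self (v : Vertex q) : v.trunc v.level = v := by
  refine Vertex.ext rfl (funext fun i => ?_)
  show (if v.level < i then 0 else v.lab i) = v.lab i
  split_ifs with h
  · exact Fin.ext (v.zero_gt i h).symm
  · rfl

theorem parent_trunc (v : Vertex q) (m : ℤ) : (v.trunc m).parent = v.trunc (m - 1) := by
  refine Vertex.ext rfl (funext fun i => ?_)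
  show (if m - 1 < i then 0 else if m < i then 0 else v.lab i)
    = if m - 1 < i then 0 else v.lab i
  split_ifs <;> first | rfl | omega

theorem parent_iterate (v : Vertex q) (k : ℕ) : parent^[k] v = v.trunc (v.level - k) := by
  induction k with
  | zero => simpa using v.trunc_self.symm
  | succ k ih =>
    rw [Function.iterate_succ_apply', ih, parent_trunc]
    congr 1
    push_cast
    ring

theorem trunc_eq_of_le_level (v : Vertex q) {m : ℤ} (hm : m ≤ v.level) :
    v.trunc m = parent^[(v.level - m).toNat] v := by
  rw [parent_iterate, Int.toNat_of_nonneg (by omega), sub_sub_cancel]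

theorem exists_trunc_eq_zeroVtx (v : Vertex q) : ∃ N, ∀ m < N, v.trunc m = zeroVtx q m := by
  obtain ⟨N, hN⟩ := v.bdd
  refine ⟨N, fun m hm => Vertex.ext rfl (funext fun i => ?_)⟩
  show (if m < i then 0 else v.lab i) = 0
  split_ifs with h
  · rfl
  · exact Fin.ext (hN i (by omega))

theorem ray_lab (v : Vertex q) (N : ℤ) (hN : ∀ i < N, (v.lab i : ℕ) = 0) (m : ℤ) :
    ray q v.lab N hN m = v.trunc m :=
  rfl

end Vertex

namespace IsomOmega

variable {x : Equiv.Perm (Vertex q)}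

theorem level_apply_trunc (hx : x ∈ IsomOmega q) (u : Vertex q) {m : ℤ} (hm : m ≤ u.level) :
    (x (u.trunc m)).level - m = (x u).level - u.level := by
  have hcomm : Function.Commute x Vertex.parent := hx
  rw [u.trunc_eq_of_le_level hm, hcomm.iterate_right, Vertex.parent_iterate]
  show (x u).level - _ - m = _
  omega

-- Any two vertices have a common ancestor: an all-zero vertex far enough towards `ω`.
theorem level_apply_sub_eq (hx : x ∈ IsomOmega q) (u v : Vertex q) :
    (x u).level - u.level = (x v).level - v.level := by
  obtain ⟨Nu, hNu⟩ := u.exists_trunc_eq_zeroVtx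
  obtain ⟨Nv, hNv⟩ := v.exists_trunc_eq_zeroVtx
  set m := min (min Nu Nv) (min u.level v.level) - 1
  rw [← level_apply_trunc hx u (m := m) (by omega), ← level_apply_trunc hx v (m := m) (by omega),
    hNu m (by omega), hNv m (by omega)]

theorem level_apply (hx : x ∈ IsomOmega q) (u : Vertex q) :
    (x u).level = u.level + lshift x := by
  have := level_apply_sub_eq hx u (zeroVtx q 0)
  have h0 : (zeroVtx q 0).level = 0 := rfl
  rw [lshift]
  omega

theorem lshift_mul (hx : x ∈ IsomOmega q) (y : Equiv.Perm (Vertex q)) :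
    lshift (x * y) = lshift x + lshift y := by
  rw [lshift, Equiv.Perm.mul_apply, level_apply hx, ← lshift, add_comm]

theorem lshift_zpow (hx : x ∈ IsomOmega q) (k : ℤ) : lshift (x ^ k) = k * lshift x := by
  have hinv : lshift x⁻¹ = -lshift x := by
    have := lshift_mul hx x⁻¹
    rw [mul_inv_cancel] at this
    have hone : lshift (1 : Equiv.Perm (Vertex q)) = 0 := rfl
    omega
  induction k using Int.induction_on with
  | zero => rw [zpow_zero, zero_mul]; rfl
  | succ k ih => rw [zpow_add_one, lshift_mul (zpow_mem hx k) x, ih]; ring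
  | pred k ih => rw [zpow_sub_one, lshift_mul (zpow_mem hx _) x⁻¹, ih, hinv]; ring

theorem lshift_eq_one_or_neg_one_of_adj (hx : x ∈ IsomOmega q) {v : Vertex q}
    (hadj : (x v).parent = v ∨ v.parent = x v) : lshift x = 1 ∨ lshift x = -1 := by
  have hlev := level_apply hx v
  have hparent : ∀ u : Vertex q, u.parent.level = u.level - 1 := fun _ => rfl
  rcases hadj with h | h <;> have := congrArg Vertex.level h <;> rw [hparent] at this <;> omega

end IsomOmega

theorem exists_mem_lshift_eq {G : Subgroup (Equiv.Perm (Vertex q))} (hG : G ≤ IsomOmega q)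
    {g : Equiv.Perm (Vertex q)} (hg : g ∈ G) (hunit : lshift g = 1 ∨ lshift g = -1) (d : ℤ) :
    ∃ x ∈ G, lshift x = d := by
  refine ⟨g ^ (d * lshift g), zpow_mem hg _, ?_⟩
  rw [IsomOmega.lshift_zpow (hG hg), mul_assoc]
  rcases hunit with h | h <;> simp [h]

theorem exists_mem_apply_eq_of_level_eq {G : Subgroup (Equiv.Perm (Vertex q))}
    (hends : ∀ (ξ ξ' : ℤ → Fin q) (N N' : ℤ)
      (hξ : ∀ i : ℤ, i < N → (ξ i : ℕ) = 0) (hξ' : ∀ i : ℤ, i < N' → (ξ' i : ℕ) = 0),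
      ∃ g ∈ G, ∀ m : ℤ, g (ray q ξ N hξ m) = ray q ξ' N' hξ' m)
    {v w : Vertex q} (hvw : v.level = w.level) : ∃ g ∈ G, g v = w := by
  obtain ⟨N, hN⟩ := v.bdd
  obtain ⟨N', hN'⟩ := w.bdd
  obtain ⟨g, hgG, hg⟩ := hends v.lab w.lab N N' hN hN'
  refine ⟨g, hgG, ?_⟩
  have := hg v.level
  rwa [Vertex.ray_lab, Vertex.ray_lab, Vertex.trunc_self, hvw, Vertex.trunc_self] at this

end Scale

open Scale in
theorem statement_4_general (q : ℕ) [NeZero q]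
    (G : Subgroup (Equiv.Perm (Vertex q)))
    (hG : G ≤ IsomOmega q)
    (h1 : ∀ (ξ ξ' : ℤ → Fin q) (N N' : ℤ)
      (hξ : ∀ i : ℤ, i < N → (ξ i : ℕ) = 0) (hξ' : ∀ i : ℤ, i < N' → (ξ' i : ℕ) = 0),
      ∃ g ∈ G, Elliptic g ∧ ∀ m : ℤ, g (ray q ξ N hξ m) = ray q ξ' N' hξ' m)
    (h2 : ∃ v : Vertex q, ∃ g ∈ G, Vertex.parent (g v) = v ∨ Vertex.parent v = g v) :
    ∀ v w : Vertex q, ∃ g ∈ G, g v = w := by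
  intro v w
  obtain ⟨v₀, g₀, hg₀, hadj⟩ := h2
  obtain ⟨x, hxG, hx⟩ := exists_mem_lshift_eq hG hg₀
    (IsomOmega.lshift_eq_one_or_neg_one_of_adj (hG hg₀) hadj) (w.level - v.level)
  have hlevel : (x v).level = w.level := by
    rw [IsomOmega.level_apply (hG hxG), hx]
    ring
  obtain ⟨y, hyG, hy⟩ := exists_mem_apply_eq_of_level_eq
    (fun ξ ξ' N N' hξ hξ' => (h1 ξ ξ' N N' hξ hξ').imp fun _ ⟨hg, _, h⟩ => ⟨hg, h⟩) hlevel
  exact ⟨y * x, G.mul_mem hyG hxG, hy⟩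

open Scale in
/-- If the elliptic elements of a closed `G ≤ Isom(T_{q+1})_ω` are
transitive on the ends other than `ω`, and some element moves a vertex to an adjacent
vertex, then `G` is vertex-transitive, i.e. a scale group. -/
theorem statement_4 (q : ℕ) [NeZero q] (hq : 2 ≤ q)
    (G : Subgroup (Equiv.Perm (Vertex q)))
    (hG : G ≤ IsomOmega q)
    (hGclosed : IsClosed (G : Set (Equiv.Perm (Vertex q))))
    (h1 : ∀ (ξ ξ' : ℤ → Fin q) (N N' : ℤ)
      (hξ : ∀ i : ℤ, i < N → (ξ i : ℕ) = 0) (hξ' : ∀ i : ℤ, i < N' → (ξ' i : ℕ) = 0),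
      ∃ g ∈ G, Elliptic g ∧ ∀ m : ℤ, g (ray q ξ N hξ m) = ray q ξ' N' hξ' m)
    (h2 : ∃ v : Vertex q, ∃ g ∈ G, Vertex.parent (g v) = v ∨ Vertex.parent v = g v) :
    ∀ v w : Vertex q, ∃ g ∈ G, g v = w :=
  statement_4_general q G hG h1 h2
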